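/- Let d be a computable 2^m × 2^m density matrix. If for every atomic vector v ∈ C^{2^m} (product tensor of m unit vectors in C²) one has v† d v = 2^{-m}, then d = 2^{-m}·I. Consequently, any density matrix d for which there exists an atomic v with v† d v ≠ 2^{-m} differs from the maximally mixed state. -/

import Mathlib

open Matrix ComplexOrder

/-- An atomic vector in `ℂ^(2^m)`: a Kronecker product of `m` unit vectors in `ℂ²`. -/
def AtomicVec (m : ℕ) (v : Fin (2^m) → ℂ) : Prop :=
  ∃ w : ℕ → Fin 2 → ℂ,
    (∀ i < m, ‖w i 0‖ ^ 2 + ‖w i 1‖ ^ 2 = 1) ∧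
    v = fun j : Fin (2^m) =>
      ∏ i ∈ Finset.range m, w i (if Nat.testBit (j : ℕ) i then 1 else 0)

namespace AtomicAux

/-- Embedding of `Fin 2 × Fin (2^m)` into `Fin (2^(m+1))` as `2*j + a`. -/
def emb (m : ℕ) (a : Fin 2) (j : Fin (2^m)) : Fin (2^(m+1)) :=
  ⟨2 * j + a, by have hj := j.isLt; have ha := a.isLt; rw [pow_succ]; omega⟩

def splitEquiv (m : ℕ) : Fin 2 × Fin (2^m) ≃ Fin (2^(m+1)) where
  toFun x := emb m x.1 x.2
  invFun p := (⟨(p : ℕ) % 2, by omega⟩,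
    ⟨(p : ℕ) / 2, by
      have h1 := p.isLt
      have h2 : (2:ℕ)^(m+1) = 2^m * 2 := pow_succ 2 m
      omega⟩)
  left_inv x := by
    have h1 := x.1.isLt
    ext
    · simp [emb]; omega
    · simp [emb]; omega
  right_inv p := by
    ext
    simp [emb]; omega

lemma sum_split (m : ℕ) (g : Fin (2^(m+1)) → ℂ) :
    ∑ p, g p = ∑ a : Fin 2, ∑ j : Fin (2^m), g (emb m a j) := by
  rw [← Equiv.sum_comp (splitEquiv m) g, Fintype.sum_prod_type]
  rfl

lemma emb_testBit_zero (m : ℕ) (a : Fin 2) (j : Fin (2^m)) :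
    (if Nat.testBit ((emb m a j : Fin (2^(m+1))) : ℕ) 0 then (1 : Fin 2) else 0) = a := by
  have hval : ((emb m a j : Fin (2^(m+1))) : ℕ) = 2 * (j : ℕ) + (a : ℕ) := rfl
  rw [hval, Nat.testBit_zero]
  simp only [decide_eq_true_eq]
  have ha := a.isLt
  by_cases hc : (2 * (j : ℕ) + (a : ℕ)) % 2 = 1
  · rw [if_pos hc]
    apply Fin.ext
    simp only [Fin.val_one]
    omega
  · rw [if_neg hc]
    apply Fin.ext
    simp only [Fin.val_zero]
    omega

lemma emb_testBit_succ (m : ℕ) (a : Fin 2) (j : Fin (2^m)) (i : ℕ) :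
    Nat.testBit ((emb m a j : Fin (2^(m+1))) : ℕ) (i+1) = Nat.testBit (j : ℕ) i := by
  have h2 : ((emb m a j : Fin (2^(m+1))) : ℕ) = 2 * (j : ℕ) + (a : ℕ) := rfl
  rw [Nat.testBit_succ, h2]
  have ha := a.isLt
  congr 1
  omega

/-- Product over `range (m+1)` splits off the bit-0 factor. -/
lemma atomic_emb (m : ℕ) (w : ℕ → Fin 2 → ℂ) (a : Fin 2) (j : Fin (2^m)) :
    (∏ i ∈ Finset.range (m+1),
        w i (if Nat.testBit ((emb m a j : Fin (2^(m+1))) : ℕ) i then 1 else 0))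
      = w 0 a * ∏ i ∈ Finset.range m, w (i+1) (if Nat.testBit (j : ℕ) i then 1 else 0) := by
  rw [Finset.prod_range_succ', mul_comm]
  congr 1
  · rw [emb_testBit_zero]
  · apply Finset.prod_congr rfl
    intro i _
    rw [emb_testBit_succ]

lemma star_mul_self_eq (z : ℂ) : star z * z = ((‖z‖ ^ 2 : ℝ) : ℂ) := by
  rw [Complex.star_def, mul_comm, Complex.mul_conj, ← Complex.sq_norm]

lemma atomic_norm (m : ℕ) (v : Fin (2^m) → ℂ) (h : AtomicVec m v) :
    star v ⬝ᵥ v = 1 := by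
  induction m with
  | zero =>
    obtain ⟨w, -, hv⟩ := h
    subst hv
    simp [dotProduct]
  | succ m ih =>
    obtain ⟨w, hw, hv⟩ := h
    set u : Fin (2^m) → ℂ :=
      fun j => ∏ i ∈ Finset.range m, w (i+1) (if Nat.testBit (j : ℕ) i then 1 else 0) with hu
    have hatom : AtomicVec m u := ⟨fun i => w (i+1), fun i hi => hw (i+1) (by omega), rfl⟩
    have hnorm : star u ⬝ᵥ u = 1 := ih u hatom
    have hvemb : ∀ (a : Fin 2) (j : Fin (2^m)), v (emb m a j) = w 0 a * u j := by
      intro a j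
      simp only [hv]
      exact atomic_emb m w a j
    calc star v ⬝ᵥ v = ∑ p, star (v p) * v p := by simp [dotProduct]
      _ = ∑ a : Fin 2, ∑ j : Fin (2^m), star (v (emb m a j)) * v (emb m a j) :=
          sum_split m _
      _ = ∑ a : Fin 2, ∑ j : Fin (2^m), (star (w 0 a) * w 0 a) * (star (u j) * u j) := by
          apply Finset.sum_congr rfl; intro a _
          apply Finset.sum_congr rfl; intro j _
          rw [hvemb a j, star_mul']
          ring
      _ = (∑ a : Fin 2, star (w 0 a) * w 0 a) * (∑ j, star (u j) * u j) := by
          rw [Finset.sum_mul]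
          apply Finset.sum_congr rfl; intro a _
          rw [Finset.mul_sum]
      _ = 1 := by
          have hud : ∑ j, star (u j) * u j = star u ⬝ᵥ u := by simp [dotProduct]
          rw [hud, hnorm, mul_one, Fin.sum_univ_two, star_mul_self_eq, star_mul_self_eq,
            ← Complex.ofReal_add, hw 0 (by omega), Complex.ofReal_one]

lemma rigid : ∀ (m : ℕ) (M : Matrix (Fin (2^m)) (Fin (2^m)) ℂ),
    (∀ v : Fin (2^m) → ℂ, AtomicVec m v → star v ⬝ᵥ (M *ᵥ v) = 0) → M = 0 := by
  intro m
  induction m with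
  | zero =>
    intro M h
    have hv : AtomicVec 0 (fun _ => (1 : ℂ)) := ⟨fun _ _ => 0, by omega, by simp⟩
    have h0 := h _ hv
    simp [dotProduct, mulVec] at h0
    ext i j
    fin_cases i; fin_cases j
    simpa using h0
  | succ m ih =>
    intro M h
    set N : Fin 2 → Fin 2 → Matrix (Fin (2^m)) (Fin (2^m)) ℂ :=
      fun a b => Matrix.of fun j k => M (emb m a j) (emb m b k) with hN
    have key : ∀ (u : Fin (2^m) → ℂ), AtomicVec m u → ∀ (w0 : Fin 2 → ℂ),
        ‖w0 0‖ ^ 2 + ‖w0 1‖ ^ 2 = 1 →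
        ∑ a : Fin 2, ∑ b : Fin 2,
          star (w0 a) * w0 b * (star u ⬝ᵥ ((N a b) *ᵥ u)) = 0 := by
      intro u hu w0 hw0
      obtain ⟨wu, hwu, huv⟩ := hu
      set w : ℕ → Fin 2 → ℂ := fun i => if i = 0 then w0 else wu (i-1) with hwdef
      set v : Fin (2^(m+1)) → ℂ :=
        fun p => ∏ i ∈ Finset.range (m+1), w i (if Nat.testBit (p : ℕ) i then 1 else 0)
        with hvdef
      have hv : AtomicVec (m+1) v := by
        refine ⟨w, ?_, rfl⟩
        intro i hi
        rcases Nat.eq_zero_or_pos i with h0 | h0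
        · subst h0; simpa [hwdef] using hw0
        · have hlt : i - 1 < m := by omega
          have := hwu (i-1) hlt
          simpa [hwdef, Nat.pos_iff_ne_zero.mp h0] using this
      have hvemb : ∀ (a : Fin 2) (j : Fin (2^m)), v (emb m a j) = w0 a * u j := by
        intro a j
        have h1 : v (emb m a j) = w 0 a *
            ∏ i ∈ Finset.range m, w (i+1) (if Nat.testBit (j : ℕ) i then 1 else 0) :=
          atomic_emb m w a j
        have huj : u j
            = ∏ i ∈ Finset.range m, wu i (if Nat.testBit (j : ℕ) i then 1 else 0) := by
          simp only [huv]
        have hw0eq : w 0 = w0 := by funext b; simp [hwdef]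
        have hwm : ∀ i : ℕ, w (i+1) = wu i := by intro i; funext b; simp [hwdef]
        rw [h1, huj, hw0eq]
        first
        | rfl
        | (congr 1
           exact Finset.prod_congr rfl fun i _ => by rw [hwm])
      have hc : (0 : ℂ) = ∑ a : Fin 2, ∑ b : Fin 2,
          star (w0 a) * w0 b * (star u ⬝ᵥ ((N a b) *ᵥ u)) := by
        calc (0 : ℂ) = star v ⬝ᵥ (M *ᵥ v) := (h v hv).symm
          _ = ∑ p, ∑ q, star (v p) * M p q * v q := by
              simp [dotProduct, mulVec, Finset.mul_sum, mul_assoc]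
          _ = ∑ a : Fin 2, ∑ j : Fin (2^m), ∑ b : Fin 2, ∑ k : Fin (2^m),
                star (v (emb m a j)) * M (emb m a j) (emb m b k) * v (emb m b k) := by
              rw [sum_split m (fun p => ∑ q, star (v p) * M p q * v q)]
              apply Finset.sum_congr rfl; intro a _
              apply Finset.sum_congr rfl; intro j _
              exact sum_split m _
          _ = ∑ a : Fin 2, ∑ j : Fin (2^m), ∑ b : Fin 2, ∑ k : Fin (2^m),
                star (w0 a) * w0 b * (star (u j) * (N a b j k * u k)) := by
              apply Finset.sum_congr rfl; intro a _
              apply Finset.sum_congr rfl; intro j _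
              apply Finset.sum_congr rfl; intro b _
              apply Finset.sum_congr rfl; intro k _
              rw [hvemb, hvemb, star_mul']
              show _ = star (w0 a) * w0 b * (star (u j) * (M (emb m a j) (emb m b k) * u k))
              ring
          _ = ∑ a : Fin 2, ∑ b : Fin 2, ∑ j : Fin (2^m), ∑ k : Fin (2^m),
                star (w0 a) * w0 b * (star (u j) * (N a b j k * u k)) := by
              apply Finset.sum_congr rfl; intro a _
              exact Finset.sum_comm
          _ = ∑ a : Fin 2, ∑ b : Fin 2,
                star (w0 a) * w0 b * (star u ⬝ᵥ ((N a b) *ᵥ u)) := by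
              apply Finset.sum_congr rfl; intro a _
              apply Finset.sum_congr rfl; intro b _
              have hd : star u ⬝ᵥ ((N a b) *ᵥ u)
                  = ∑ j, star (u j) * ∑ k, N a b j k * u k := by
                simp [dotProduct, mulVec]
              simp only [← Finset.mul_sum]
              rw [hd]
      exact hc.symm
    -- every block vanishes
    have hblock : ∀ (a b : Fin 2), N a b = 0 := by
      have main : ∀ (u : Fin (2^m) → ℂ), AtomicVec m u →
          ∀ a b, star u ⬝ᵥ ((N a b) *ᵥ u) = 0 := by
        intro u hu
        have keyu := key u hu
        set r : ℝ := (Real.sqrt 2)⁻¹ with hr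
        have hr0 : 0 < r := by rw [hr]; positivity
        have hrsq : r ^ 2 = 1/2 := by
          rw [hr, inv_pow, Real.sq_sqrt (by norm_num : (0:ℝ) ≤ 2)]
          norm_num
        have hrC : ((r : ℝ) : ℂ) ≠ 0 := by exact_mod_cast hr0.ne'
        -- four test vectors
        have c1 := keyu ![1, 0] (by simp)
        have c2 := keyu ![0, 1] (by simp)
        have c3 := keyu ![(r : ℂ), (r : ℂ)] (by
          simp [Complex.norm_real, Real.norm_eq_abs, abs_of_pos hr0]
          rw [hrsq]; norm_num)
        have c4 := keyu ![(r : ℂ), (r : ℂ) * Complex.I] (by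
          simp [Complex.norm_real, Real.norm_eq_abs, abs_of_pos hr0]
          rw [hrsq]; norm_num)
        simp only [Fin.sum_univ_two, Matrix.cons_val_zero, Matrix.cons_val_one,
          Matrix.head_cons, star_one, star_zero, one_mul, mul_one, zero_mul, mul_zero,
          add_zero, zero_add, star_mul', Complex.star_def, Complex.conj_ofReal,
          Complex.conj_I, _root_.map_mul, _root_.map_zero, _root_.map_one] at c1 c2 c3 c4
        have h00 : star u ⬝ᵥ ((N 0 0) *ᵥ u) = 0 := by linear_combination c1
        have h11 : star u ⬝ᵥ ((N 1 1) *ᵥ u) = 0 := by linear_combination c2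
        have e3 : ((r : ℝ) : ℂ)^2
            * (star u ⬝ᵥ ((N 0 1) *ᵥ u) + star u ⬝ᵥ ((N 1 0) *ᵥ u)) = 0 := by
          linear_combination c3 - ((r:ℝ):ℂ)*((r:ℝ):ℂ)*h00 - ((r:ℝ):ℂ)*((r:ℝ):ℂ)*h11
        have e4 : ((r : ℝ) : ℂ)^2 * Complex.I
            * (star u ⬝ᵥ ((N 0 1) *ᵥ u) - star u ⬝ᵥ ((N 1 0) *ᵥ u)) = 0 := by
          linear_combination c4 - ((r:ℝ):ℂ)*((r:ℝ):ℂ)*h00 - ((r:ℝ):ℂ)*((r:ℝ):ℂ)*h11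
            + ((r:ℝ):ℂ)^2 * (star u ⬝ᵥ ((N 1 1) *ᵥ u)) * Complex.I_sq
        have h3 : star u ⬝ᵥ ((N 0 1) *ᵥ u) + star u ⬝ᵥ ((N 1 0) *ᵥ u) = 0 := by
          rcases mul_eq_zero.mp e3 with hz | hz
          · exact absurd hz (pow_ne_zero 2 hrC)
          · exact hz
        have h4 : star u ⬝ᵥ ((N 0 1) *ᵥ u) - star u ⬝ᵥ ((N 1 0) *ᵥ u) = 0 := by
          rcases mul_eq_zero.mp e4 with hz | hz
          · rcases mul_eq_zero.mp hz with hz' | hz'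
            · exact absurd hz' (pow_ne_zero 2 hrC)
            · exact absurd hz' Complex.I_ne_zero
          · exact hz
        have h01 : star u ⬝ᵥ ((N 0 1) *ᵥ u) = 0 := by linear_combination h3/2 + h4/2
        have h10 : star u ⬝ᵥ ((N 1 0) *ᵥ u) = 0 := by linear_combination h3/2 - h4/2
        intro a b
        fin_cases a <;> fin_cases b
        · exact h00
        · exact h01
        · exact h10
        · exact h11
      intro a b
      exact ih (N a b) (fun u hu => main u hu a b)
    ext p q
    have hp : (p : ℕ) < 2^m * 2 := lt_of_lt_of_eq p.isLt (pow_succ 2 m)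
    have hq : (q : ℕ) < 2^m * 2 := lt_of_lt_of_eq q.isLt (pow_succ 2 m)
    have ep : p = emb m ⟨(p:ℕ) % 2, by omega⟩ ⟨(p:ℕ)/2, by omega⟩ := by
      apply Fin.ext; simp [emb]; omega
    have eq' : q = emb m ⟨(q:ℕ) % 2, by omega⟩ ⟨(q:ℕ)/2, by omega⟩ := by
      apply Fin.ext; simp [emb]; omega
    have hMpq : M p q = M (emb m ⟨(p:ℕ) % 2, by omega⟩ ⟨(p:ℕ)/2, by omega⟩)
        (emb m ⟨(q:ℕ) % 2, by omega⟩ ⟨(q:ℕ)/2, by omega⟩) := by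
      congr 1
    rw [hMpq]
    have := congrFun (congrFun (hblock ⟨(p:ℕ) % 2, by omega⟩ ⟨(q:ℕ) % 2, by omega⟩)
      ⟨(p:ℕ)/2, by omega⟩) ⟨(q:ℕ)/2, by omega⟩
    simpa [hN] using this

end AtomicAux

/-- a density matrix `d` on `2^m` dimensions with `v† d v = 2^{-m}` for
every atomic `v` equals the maximally mixed state `2^{-m} I`; consequently, a density
matrix with some atomic `v` such that `v† d v ≠ 2^{-m}` differs from `2^{-m} I`. -/
theorem density_matrix_atomic_rigidity (m : ℕ)
    (d : Matrix (Fin (2^m)) (Fin (2^m)) ℂ) (hpsd : d.PosSemidef) (htr : d.trace = 1) :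
    ((∀ v : Fin (2^m) → ℂ, AtomicVec m v → star v ⬝ᵥ (d *ᵥ v) = ((2:ℂ)^m)⁻¹) →
        d = ((2:ℂ)^m)⁻¹ • (1 : Matrix (Fin (2^m)) (Fin (2^m)) ℂ)) ∧
    ((∃ v : Fin (2^m) → ℂ, AtomicVec m v ∧ star v ⬝ᵥ (d *ᵥ v) ≠ ((2:ℂ)^m)⁻¹) →
        d ≠ ((2:ℂ)^m)⁻¹ • (1 : Matrix (Fin (2^m)) (Fin (2^m)) ℂ)) := by
  have unit : ∀ v : Fin (2^m) → ℂ, AtomicVec m v →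
      star v ⬝ᵥ ((((2:ℂ)^m)⁻¹ • (1 : Matrix (Fin (2^m)) (Fin (2^m)) ℂ)) *ᵥ v)
        = ((2:ℂ)^m)⁻¹ := by
    intro v hv
    rw [Matrix.smul_mulVec, Matrix.one_mulVec, dotProduct_smul,
      AtomicAux.atomic_norm m v hv]
    simp
  constructor
  · intro hall
    have h0 : d - ((2:ℂ)^m)⁻¹ • (1 : Matrix (Fin (2^m)) (Fin (2^m)) ℂ) = 0 := by
      apply AtomicAux.rigid m
      intro v hv
      rw [Matrix.sub_mulVec, dotProduct_sub, hall v hv, unit v hv, sub_self]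
    exact sub_eq_zero.mp h0
  · rintro ⟨v, hv, hne⟩ heq
    exact hne (by rw [heq]; exact unit v hv)
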